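/- arXiv:2508.08486 — 2 statements merged into one kernel-verified Lean document; each statement's English description precedes it below -/
import Mathlib

section
/- There is no function f from ordinal preference datasets and feasible sets to models that always outputs a most preferred model: formally, if two preference relations ≿¹ and ≿² over models agree on all pairwise prompt-level comparisons (hence generate identical ordinal datasets) but rank two models π¹, π² oppositely (π¹ ≻¹ π² and π² ≻² π¹), then any f applied to the common dataset and feasible set {π¹, π²} fails to select the optimal model for at least one of ≿¹, ≿². -/
def IsDist {Y : Type*} [Fintype Y] (p : Y → ℝ) : Prop :=
  (∀ y, 0 ≤ p y) ∧ ∑ y, p y = 1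

def IsModel {X Y : Type*} [Fintype Y] (π : X → Y → ℝ) : Prop :=
  ∀ x, IsDist (π x)

theorem not_max_pair_of_opposite_rank {α : Type*} (r₁ r₂ : α → α → Prop) {a b c : α}
    (hc : c ∈ ({a, b} : Set α)) (h₁ : ¬ r₁ b a) (h₂ : ¬ r₂ a b) :
    ¬ ((∀ z ∈ ({a, b} : Set α), r₁ c z) ∧ ∀ z ∈ ({a, b} : Set α), r₂ c z) := by
  rintro ⟨hmax₁, hmax₂⟩
  rcases hc with rfl | rfl
  · exact h₂ (hmax₂ b (Set.mem_insert_of_mem _ rfl))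
  · exact h₁ (hmax₁ a (Set.mem_insert _ _))

theorem stmt_0_general {X Y : Type*} {Dataset : Type*}
    -- the ordinal dataset is determined by the prompt-level comparisons
    (mkDataset : (X → Y → Y → Prop) → Dataset)
    -- two preference relations over models
    (pref₁ pref₂ : (X → Y → ℝ) → (X → Y → ℝ) → Prop)
    -- their induced prompt-level comparisons
    (promptPref₁ promptPref₂ : X → Y → Y → Prop)
    (hagree : promptPref₁ = promptPref₂)
    -- two feasible models ranked oppositely by the two preferences
    (π₁ π₂ : X → Y → ℝ)
    (hstrict₁ : pref₁ π₁ π₂ ∧ ¬ pref₁ π₂ π₁)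
    (hstrict₂ : pref₂ π₂ π₁ ∧ ¬ pref₂ π₁ π₂)
    -- any fine-tuning algorithm mapping (dataset, feasible set) to a feasible model
    (f : Dataset → Set (X → Y → ℝ) → (X → Y → ℝ))
    (hfeas : f (mkDataset promptPref₁) {π₁, π₂} ∈ ({π₁, π₂} : Set (X → Y → ℝ))) :
    ¬ ((∀ π ∈ ({π₁, π₂} : Set (X → Y → ℝ)), pref₁ (f (mkDataset promptPref₁) {π₁, π₂}) π) ∧
       (∀ π ∈ ({π₁, π₂} : Set (X → Y → ℝ)), pref₂ (f (mkDataset promptPref₂) {π₁, π₂}) π)) := by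
  rw [← hagree]
  exact not_max_pair_of_opposite_rank pref₁ pref₂ hfeas hstrict₁.2 hstrict₂.2

/-- No algorithm `f` consuming only the ordinal dataset (which is a function of the
prompt-level comparisons) can always output a most preferred feasible model:
if `pref₁` and `pref₂` induce the same prompt-level comparisons (hence the same
ordinal dataset) but rank `π₁, π₂` oppositely, `f` fails for at least one of them. -/
theorem stmt_0 {X Y : Type*} [Fintype Y] {Dataset : Type*}
    -- the ordinal dataset is determined by the prompt-level comparisons
    (mkDataset : (X → Y → Y → Prop) → Dataset)
    -- two preference relations over models
    (pref₁ pref₂ : (X → Y → ℝ) → (X → Y → ℝ) → Prop)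
    -- their induced prompt-level comparisons
    (promptPref₁ promptPref₂ : X → Y → Y → Prop)
    (hagree : promptPref₁ = promptPref₂)
    -- two feasible models ranked oppositely by the two preferences
    (π₁ π₂ : X → Y → ℝ) (hm₁ : IsModel π₁) (hm₂ : IsModel π₂)
    (hstrict₁ : pref₁ π₁ π₂ ∧ ¬ pref₁ π₂ π₁)
    (hstrict₂ : pref₂ π₂ π₁ ∧ ¬ pref₂ π₁ π₂)
    -- any fine-tuning algorithm mapping (dataset, feasible set) to a feasible model
    (f : Dataset → Set (X → Y → ℝ) → (X → Y → ℝ))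
    (hfeas : f (mkDataset promptPref₁) {π₁, π₂} ∈ ({π₁, π₂} : Set (X → Y → ℝ))) :
    ¬ ((∀ π ∈ ({π₁, π₂} : Set (X → Y → ℝ)), pref₁ (f (mkDataset promptPref₁) {π₁, π₂}) π) ∧
       (∀ π ∈ ({π₁, π₂} : Set (X → Y → ℝ)), pref₂ (f (mkDataset promptPref₂) {π₁, π₂}) π)) :=
  stmt_0_general mkDataset pref₁ pref₂ promptPref₁ promptPref₂ hagree π₁ π₂ hstrict₁ hstrict₂ f
    hfeas
end

section
/- Suppose a dataset of cardinal labels covers all pairs: for every x ∈ X and y, y' ∈ Y it contains the label w(x,y,y') = r_true(x,y') − r_true(x,y). If r̂ achieves zero squared-error loss on this dataset, then for any finite feasible set F of models, every maximizer of Σ_{x,y} π(y|x) r̂(x,y) over F is also a maximizer of Σ_{x,y} π(y|x) r_true(x,y) over F. -/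
/-!
Zero loss on all pairwise differences forces `r̂(x, ·) = r_true(x, ·) + c(x)` for some
`c : X → ℝ`. Since every model is a probability distribution on `Y` for each `x`, shifting the
reward by `c(x)` shifts the expected utility of every model by the same constant `∑ₓ c(x)`,
so the two objectives have the same maximizers.
-/

/-- Expected utility of a model under reward `r`. -/
def expUtility {X Y : Type*} [Fintype X] [Fintype Y] (r : X → Y → ℝ) (π : X → Y → ℝ) : ℝ :=
  ∑ x, ∑ y, π x y * r x y

theorem exists_eq_add_of_sub_eq_sub {X Y : Type*} [Nonempty Y] {r s : X → Y → ℝ}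
    (h : ∀ x y y', r x y' - r x y = s x y' - s x y) :
    ∃ c : X → ℝ, ∀ x y, r x y = s x y + c x := by
  obtain ⟨y₀⟩ := ‹Nonempty Y›
  exact ⟨fun x => r x y₀ - s x y₀, fun x y => by linarith [h x y₀ y]⟩

theorem expUtility_add_const {X Y : Type*} [Fintype X] [Fintype Y] (r : X → Y → ℝ)
    (c : X → ℝ) {π : X → Y → ℝ} (hπ : ∀ x, ∑ y, π x y = 1) :
    expUtility (fun x y => r x y + c x) π = expUtility r π + ∑ x, c x := by
  simp only [expUtility, mul_add, Finset.sum_add_distrib, ← Finset.sum_mul, hπ, one_mul]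

theorem stmt_11_general {X Y : Type*} [Fintype X] [Fintype Y] [Nonempty Y]
    (rtrue rhat : X → Y → ℝ) (w : X → Y → Y → ℝ)
    (hw : ∀ x y y', w x y y' = rtrue x y' - rtrue x y)
    (hfit : ∀ x y y', rhat x y' - rhat x y = w x y y')
    (F : Finset (X → Y → ℝ))
    (hmodels : ∀ π ∈ F, (∀ x y, 0 ≤ π x y) ∧ ∀ x, ∑ y, π x y = 1)
    (πstar : X → Y → ℝ) (hπstar : πstar ∈ F)
    (hmax : ∀ π ∈ F, expUtility rhat π ≤ expUtility rhat πstar) :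
    ∀ π ∈ F, expUtility rtrue π ≤ expUtility rtrue πstar := by
  obtain ⟨c, hc⟩ := exists_eq_add_of_sub_eq_sub (r := rhat) (s := rtrue)
    fun x y y' => (hfit x y y').trans (hw x y y')
  have hshift : ∀ π ∈ F, expUtility rhat π = expUtility rtrue π + ∑ x, c x := fun π hπ => by
    rw [← expUtility_add_const rtrue c (hmodels π hπ).2]
    exact congrArg (expUtility · π) (funext₂ hc)
  intro π hπ
  have hle := hmax π hπ
  rw [hshift π hπ, hshift πstar hπstar] at hle
  linarith

/-- If the dataset covers all pairs with labels `w(x,y,y') = r_true(x,y') − r_true(x,y)`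
and `r̂` achieves zero squared-error loss (i.e. matches all labels), then over any finite
feasible set of models, any maximizer of expected utility under `r̂` also maximizes
expected utility under `r_true`. -/
theorem stmt_11 {X Y : Type*} [Fintype X] [Fintype Y] [Nonempty X] [Nonempty Y]
    (rtrue rhat : X → Y → ℝ) (w : X → Y → Y → ℝ)
    (hw : ∀ x y y', w x y y' = rtrue x y' - rtrue x y)
    (hfit : ∀ x y y', rhat x y' - rhat x y = w x y y')
    (F : Finset (X → Y → ℝ))
    (hmodels : ∀ π ∈ F, (∀ x y, 0 ≤ π x y) ∧ ∀ x, ∑ y, π x y = 1)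
    (πstar : X → Y → ℝ) (hπstar : πstar ∈ F)
    (hmax : ∀ π ∈ F, expUtility rhat π ≤ expUtility rhat πstar) :
    ∀ π ∈ F, expUtility rtrue π ≤ expUtility rtrue πstar :=
  stmt_11_general rtrue rhat w hw hfit F hmodels πstar hπstar hmax
end
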